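/- For all T > 0 and C₁, C₂, C_A, C_L > 0 there exists a constant C > 0, depending only on T, C₁, C₂, C_A, C_L, with the following property. Let H be a real Hilbert space and L : H → H a bounded dissipative bijective linear operator. Let H' be a finite-dimensional real inner product space, J : H' → H an injective continuous linear map with C₁‖J v‖ ≤ ‖v‖' ≤ C₂‖J v‖ for all v ∈ H', and P : H → H' a continuous linear map. Let A', B' : H' → H' be linear operators that are dissipative with respect to the inner product of H', such that L' = A' + B' is bijective with ‖L'⁻¹‖' ≤ C_L and ‖A' ∘ L'⁻¹‖' ≤ C_A (operator norms with respect to ‖·‖'). Suppose ε ≥ 0 is such that for all v ∈ H: ‖J(P v) − v‖ ≤ ε(‖v‖ + ‖L v‖) and ‖J(L'⁻¹(P v)) − L⁻¹ v‖ ≤ ε(‖v‖ + ‖L v‖). For k > 0 let S' = (I − kB')⁻¹ ∘ (I − kA')⁻¹ ∘ (I + k² A'∘B') and Q = L'⁻¹ ∘ P ∘ L. Then for every n ∈ ℕ and k > 0 with nk ≤ T and every η ∈ H: ‖exp(nkL)η − J(S'ⁿ(Qη))‖ ≤ C(ε + k)(‖Lη‖ + ‖L²η‖ + ‖L³η‖).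 -/

import Mathlib

/-!
Compare `u(t) = exp(tL) η` with the discrete solution through the elliptic projection
`Q = L'⁻¹ P L`: the spatial part `u(t) - J Q u(t)` is `O(ε)` by the second approximation
hypothesis, and it remains to bound `eₙ = Q u(nk) - S'ⁿ Q η` in `H'`.

With `a = kA'`, `b = kB'`, `α = (1 - a)⁻¹`, `β = (1 - b)⁻¹` one has `(1 - b) S' = M (1 - b)`
for `M = αβ + (α - 1)(β - 1) = (1 + (2α - 1)(2β - 1)) / 2`, and the Cayley transforms
`2α - 1`, `2β - 1` of the dissipative `a`, `b` are contractions. So `S'` does not increase the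
norm `‖(1 - b) ·‖`, which dominates `‖·‖`, and summing local errors in this norm bounds
`‖(1 - b) eₙ‖` by `n` times the local error. That one is `O(k² + εk)`: the one-step defect of
`S'` reduces to the residual `Q u((m+1)k) - Q u(mk) - k L' Q u(mk)`, which Taylor expansion
of the contraction semigroup and the approximation hypotheses bound by `‖L u‖`, `‖L² u‖`,
`‖L³ u‖`, none of which grows in time.
-/

open scoped RealInnerProductSpace
open NormedSpace

section Semigroup

variable {H : Type*} [NormedAddCommGroup H]

theorem hasDerivAt_exp_smul_apply [NormedSpace ℝ H] [CompleteSpace H] (L : H →L[ℝ] H) (v : H)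
    (t : ℝ) : HasDerivAt (fun s : ℝ => exp (s • L) v) (L (exp (t • L) v)) t := by
  simpa using (hasDerivAt_exp_smul_const' L t).clm_apply (hasDerivAt_const t v)

theorem apply_exp_smul_apply [NormedSpace ℝ H] [CompleteSpace H] (L : H →L[ℝ] H) (t : ℝ)
    (v : H) : L (exp (t • L) v) = exp (t • L) (L v) :=
  congrArg (· v) ((Commute.refl L).smul_right t).exp_right.eq

theorem exp_add_smul_apply [NormedSpace ℝ H] [CompleteSpace H] (L : H →L[ℝ] H) (s t : ℝ)
    (v : H) : exp ((s + t) • L) v = exp (s • L) (exp (t • L) v) := by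
  have hball (x : H →L[ℝ] H) : x ∈ Metric.eball 0 (expSeries ℝ (H →L[ℝ] H)).radius :=
    (expSeries_radius_eq_top ℝ (H →L[ℝ] H)).symm ▸ edist_lt_top _ _
  rw [add_smul, exp_add_of_commute_of_mem_ball
    (((Commute.refl L).smul_left s).smul_right t) (hball _) (hball _)]
  rfl

variable [InnerProductSpace ℝ H] [CompleteSpace H] {L : H →L[ℝ] H}

theorem norm_exp_smul_apply_le (hL : ∀ v, ⟪L v, v⟫ ≤ 0) {t : ℝ} (ht : 0 ≤ t) (v : H) :
    ‖exp (t • L) v‖ ≤ ‖v‖ := by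
  have hsq : Antitone fun s : ℝ => ‖exp (s • L) v‖ ^ 2 :=
    antitone_of_hasDerivAt_nonpos (fun s => (hasDerivAt_exp_smul_apply L v s).norm_sq)
      fun s => by
        rw [real_inner_comm]
        exact mul_nonpos_of_nonneg_of_nonpos zero_le_two (hL _)
  have h := hsq ht
  simp only [zero_smul, exp_zero, one_apply_eq_self] at h
  exact pow_le_pow_iff_left₀ (norm_nonneg _) (norm_nonneg _) two_ne_zero |>.mp h

theorem norm_exp_smul_apply_sub_le (hL : ∀ v, ⟪L v, v⟫ ≤ 0) {t : ℝ} (ht : 0 ≤ t) (v : H) :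
    ‖exp (t • L) v - v‖ ≤ t * ‖L v‖ := by
  have h := norm_image_sub_le_of_norm_deriv_le_segment' (f := fun s : ℝ => exp (s • L) v)
    (fun s _ => (hasDerivAt_exp_smul_apply L v s).hasDerivWithinAt)
    (fun s hs => by
      rw [apply_exp_smul_apply]
      exact norm_exp_smul_apply_le hL hs.1 (L v)) t ⟨ht, le_rfl⟩
  simpa [mul_comm] using h

theorem norm_exp_smul_apply_sub_sub_le (hL : ∀ v, ⟪L v, v⟫ ≤ 0) {t : ℝ} (ht : 0 ≤ t) (v : H) :
    ‖exp (t • L) v - v - t • L v‖ ≤ t ^ 2 * ‖L (L v)‖ := by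
  have hderiv (s : ℝ) : HasDerivAt (fun r : ℝ => exp (r • L) v - v - r • L v)
      (exp (s • L) (L v) - L v) s := by
    rw [← apply_exp_smul_apply]
    exact ((hasDerivAt_exp_smul_apply L v s).sub_const v).sub
      (by simpa using (hasDerivAt_id' s).smul_const (L v))
  have h := norm_image_sub_le_of_norm_deriv_le_segment' (C := t * ‖L (L v)‖)
    (fun s _ => (hderiv s).hasDerivWithinAt)
    (fun s hs => (norm_exp_smul_apply_sub_le hL hs.1 (L v)).trans
      (mul_le_mul_of_nonneg_right hs.2.le (norm_nonneg _))) t ⟨ht, le_rfl⟩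
  simpa [sq, mul_assoc, mul_comm, mul_left_comm] using h

theorem norm_apply_exp_smul_apply_sub_sub_le (hL : ∀ v, ⟪L v, v⟫ ≤ 0) {t : ℝ} (ht : 0 ≤ t)
    (v : H) : ‖L (exp (t • L) v - v - t • L v)‖ ≤ 2 * t * ‖L (L v)‖ := by
  rw [map_sub, map_sub, map_smul, apply_exp_smul_apply]
  calc _ ≤ ‖exp (t • L) (L v) - L v‖ + ‖t • L (L v)‖ := norm_sub_le _ _
    _ ≤ t * ‖L (L v)‖ + t * ‖L (L v)‖ := by
      rw [norm_smul, Real.norm_of_nonneg ht]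
      gcongr
      exact norm_exp_smul_apply_sub_le hL ht _
    _ = 2 * t * ‖L (L v)‖ := by ring

theorem sum_norm_iterate_exp_smul_apply_le (hL : ∀ v, ⟪L v, v⟫ ≤ 0) {t : ℝ} (ht : 0 ≤ t)
    (v : H) :
    ‖L (exp (t • L) v)‖ + ‖L (L (exp (t • L) v))‖ + ‖L (L (L (exp (t • L) v)))‖ ≤
      ‖L v‖ + ‖L (L v)‖ + ‖L (L (L v))‖ := by
  simp only [apply_exp_smul_apply]
  have hexp := norm_exp_smul_apply_le hL ht
  exact add_le_add (add_le_add (hexp _) (hexp _)) (hexp _)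

end Semigroup

section Dissipative

variable {E : Type*} [NormedAddCommGroup E] [InnerProductSpace ℝ E]

theorem norm_le_norm_sub_of_inner_nonpos {x y : E} (h : ⟪y, x⟫ ≤ 0) : ‖x‖ ≤ ‖x - y‖ := by
  refine pow_le_pow_iff_left₀ (norm_nonneg _) (norm_nonneg _) two_ne_zero |>.mp ?_
  rw [norm_sub_sq_real, real_inner_comm]
  nlinarith [sq_nonneg ‖y‖]

theorem norm_add_le_norm_sub_of_inner_nonpos {x y : E} (h : ⟪y, x⟫ ≤ 0) :
    ‖x + y‖ ≤ ‖x - y‖ := by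
  refine pow_le_pow_iff_left₀ (norm_nonneg _) (norm_nonneg _) two_ne_zero |>.mp ?_
  rw [norm_sub_sq_real, norm_add_sq_real, real_inner_comm]
  linarith

variable {a α : E →L[ℝ] E}

theorem inner_smul_apply_self_nonpos (ha : ∀ v, ⟪a v, v⟫ ≤ 0) {k : ℝ} (hk : 0 ≤ k) (v : E) :
    ⟪(k • a) v, v⟫ ≤ 0 := by
  rw [smul_apply, real_inner_smul_left]
  exact mul_nonpos_of_nonneg_of_nonpos hk (ha v)

theorem norm_le_norm_one_sub_apply (ha : ∀ v, ⟪a v, v⟫ ≤ 0) (v : E) : ‖v‖ ≤ ‖(1 - a) v‖ :=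
  norm_le_norm_sub_of_inner_nonpos (ha v)

theorem norm_apply_le_of_one_sub_mul_eq_one (ha : ∀ v, ⟪a v, v⟫ ≤ 0) (hα' : (1 - a) * α = 1)
    (w : E) : ‖α w‖ ≤ ‖w‖ := by
  simpa [← mul_apply_eq_comp, hα'] using norm_le_norm_one_sub_apply ha (α w)

theorem norm_two_mul_sub_one_apply_le (ha : ∀ v, ⟪a v, v⟫ ≤ 0) (hα' : (1 - a) * α = 1)
    (w : E) : ‖(2 * α - 1) w‖ ≤ ‖w‖ := by
  have hw : α w - a (α w) = w := by simpa using congrArg (· w) hα'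
  have h2 : (2 * α - 1) w = (2 : ℝ) • α w - w := by simp [two_mul, two_smul]
  set x := α w
  rw [h2, ← hw]
  convert norm_add_le_norm_sub_of_inner_nonpos (ha x) using 2
  module

end Dissipative

section DouglasRachfordAlgebra

variable {R : Type*} [Ring R] {a b α β : R}

/-- With `α = (1 - a)⁻¹` and `β = (1 - b)⁻¹` this is the Douglas–Rachford step
`(1 - b)⁻¹ (1 - a)⁻¹ (1 + a b)`. -/
def douglasRachford (a b α β : R) : R := β * α * (1 + a * b)

theorem mul_eq_sub_one_of_mul_one_sub_eq_one (hα : α * (1 - a) = 1) : α * a = α - 1 := by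
  rw [← hα]; noncomm_ring

theorem one_sub_mul_douglasRachford (hα : α * (1 - a) = 1) (hβ' : (1 - b) * β = 1) :
    (1 - b) * douglasRachford a b α β = 1 - b + α * (a + b) :=
  calc (1 - b) * (β * α * (1 + a * b)) = (1 - b) * β * (α + α * a * b) := by noncomm_ring
    _ = 1 - b + α * (a + b) := by
      rw [hβ', mul_add α, mul_eq_sub_one_of_mul_one_sub_eq_one hα]; noncomm_ring

theorem one_sub_mul_douglasRachford_eq_mul_one_sub (hα : α * (1 - a) = 1)
    (hβ : β * (1 - b) = 1) (hβ' : (1 - b) * β = 1) :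
    (1 - b) * douglasRachford a b α β = (α * β + (α - 1) * (β - 1)) * (1 - b) :=
  calc (1 - b) * douglasRachford a b α β
      = α * (β * (1 - b)) + (α - 1) * (β * (1 - b)) - (α - 1) * (1 - b) := by
        rw [one_sub_mul_douglasRachford hα hβ', hβ, mul_add α,
          mul_eq_sub_one_of_mul_one_sub_eq_one hα]
        noncomm_ring
    _ = (α * β + (α - 1) * (β - 1)) * (1 - b) := by noncomm_ring

end DouglasRachfordAlgebra

section DouglasRachfordStability

variable {E : Type*} [NormedAddCommGroup E] [InnerProductSpace ℝ E] {a b α β : E →L[ℝ] E}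

theorem norm_mul_add_sub_one_mul_sub_one_apply_le (ha : ∀ v, ⟪a v, v⟫ ≤ 0)
    (hb : ∀ v, ⟪b v, v⟫ ≤ 0) (hα' : (1 - a) * α = 1) (hβ' : (1 - b) * β = 1) (v : E) :
    ‖(α * β + (α - 1) * (β - 1)) v‖ ≤ ‖v‖ := by
  have hT : (α * β + (α - 1) * (β - 1)) v + (α * β + (α - 1) * (β - 1)) v =
      v + (2 * α - 1) ((2 * β - 1) v) := by
    have h := congrArg (· v) (show (α * β + (α - 1) * (β - 1)) + (α * β + (α - 1) * (β - 1)) =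
      1 + (2 * α - 1) * (2 * β - 1) by noncomm_ring)
    simpa only [add_apply, mul_apply_eq_comp, one_apply_eq_self] using h
  have h := norm_add_le v ((2 * α - 1) ((2 * β - 1) v))
  rw [← hT, ← two_smul ℝ, norm_smul, Real.norm_two] at h
  linarith [(norm_two_mul_sub_one_apply_le ha hα' _).trans (norm_two_mul_sub_one_apply_le hb hβ' v)]

theorem norm_one_sub_apply_douglasRachford_apply_le (ha : ∀ v, ⟪a v, v⟫ ≤ 0)
    (hb : ∀ v, ⟪b v, v⟫ ≤ 0) (hα : α * (1 - a) = 1) (hα' : (1 - a) * α = 1)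
    (hβ : β * (1 - b) = 1) (hβ' : (1 - b) * β = 1) (v : E) :
    ‖(1 - b) (douglasRachford a b α β v)‖ ≤ ‖(1 - b) v‖ := by
  rw [← mul_apply_eq_comp, one_sub_mul_douglasRachford_eq_mul_one_sub hα hβ hβ',
    mul_apply_eq_comp]
  exact norm_mul_add_sub_one_mul_sub_one_apply_le ha hb hα' hβ' _

theorem norm_one_sub_apply_sub_douglasRachford_apply_le (ha : ∀ v, ⟪a v, v⟫ ≤ 0)
    (hα : α * (1 - a) = 1) (hα' : (1 - a) * α = 1) (hβ' : (1 - b) * β = 1) (x y : E) :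
    ‖(1 - b) (x - douglasRachford a b α β y)‖ ≤
      ‖x - y - (a + b) y‖ + ‖a (x - y)‖ + ‖b (x - y)‖ := by
  have hS := congrArg (· y) (one_sub_mul_douglasRachford hα hβ')
  have hd := congrArg (· (x - y)) hα
  simp only [mul_apply_eq_comp, add_apply, sub_apply, one_apply_eq_self, map_sub, map_add]
    at hS hd
  have hdefect : (1 - b) (x - douglasRachford a b α β y) =
      α (x - y - (a + b) y - a (x - y)) - b (x - y) := by
    simp only [sub_apply, add_apply, one_apply_eq_self, map_sub, map_add, hS]
    linear_combination (norm := abel) -hd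
  calc ‖(1 - b) (x - douglasRachford a b α β y)‖
      ≤ ‖x - y - (a + b) y - a (x - y)‖ + ‖b (x - y)‖ := by
        rw [hdefect]
        exact (norm_sub_le _ _).trans
          (by gcongr; exact norm_apply_le_of_one_sub_mul_eq_one ha hα' _)
    _ ≤ ‖x - y - (a + b) y‖ + ‖a (x - y)‖ + ‖b (x - y)‖ := by gcongr; exact norm_sub_le _ _

theorem norm_douglasRachford_localError_le {k CA : ℝ} (ha : ∀ v, ⟪a v, v⟫ ≤ 0) (hk : 0 ≤ k)
    (hα : α * (1 - k • a) = 1) (hα' : (1 - k • a) * α = 1) (hβ' : (1 - k • b) * β = 1)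
    (haL : ∀ z, ‖a z‖ ≤ CA * ‖(a + b) z‖) (x y : E) :
    ‖(1 - k • b) (x - douglasRachford (k • a) (k • b) α β y)‖ ≤
      ‖x - y - k • (a + b) y‖ + k * (1 + 2 * CA) * ‖(a + b) (x - y)‖ := by
  have hbL (z : E) : ‖b z‖ ≤ (1 + CA) * ‖(a + b) z‖ := by
    have : b z = (a + b) z - a z := by simp
    rw [this]
    linarith [norm_sub_le ((a + b) z) (a z), haL z]
  have h := norm_one_sub_apply_sub_douglasRachford_apply_le
    (inner_smul_apply_self_nonpos ha hk) hα hα' hβ' x y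
  rw [← smul_add, smul_apply, smul_apply, smul_apply, norm_smul, norm_smul,
    Real.norm_of_nonneg hk] at h
  nlinarith [haL (x - y), hbL (x - y)]

end DouglasRachfordStability

theorem norm_apply_sub_pow_apply_le {R E F : Type*} [Semiring R] [SeminormedAddCommGroup E]
    [SeminormedAddCommGroup F] [Module R E] [Module R F] {S : E →L[R] E} {W : E →L[R] F}
    (hS : ∀ x, ‖W (S x)‖ ≤ ‖W x‖) {y : ℕ → E} {D : ℝ}
    (hy : ∀ m, ‖W (y (m + 1) - S (y m))‖ ≤ D) (n : ℕ) :
    ‖W (y n - (S ^ n) (y 0))‖ ≤ n * D := by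
  induction n with
  | zero => simp
  | succ n ih =>
    have h : y (n + 1) - (S ^ (n + 1)) (y 0) =
        (y (n + 1) - S (y n)) + S (y n - (S ^ n) (y 0)) := by
      rw [pow_succ', mul_apply_eq_comp, map_sub]; abel
    rw [h, map_add]
    calc _ ≤ D + n * D := (norm_add_le _ _).trans (add_le_add (hy n) ((hS _).trans ih))
      _ = (n + 1 : ℕ) * D := by push_cast; ring

section SpatialDiscretization

/-! `P : H → H'` is the projection onto the discrete space and `L'inv ∘ P ∘ L` the elliptic
projection `Q`. -/

variable {H H' : Type*} [NormedAddCommGroup H] [NormedSpace ℝ H] [NormedAddCommGroup H']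
  [NormedSpace ℝ H'] {L Linv : H →L[ℝ] H} {J : H' →L[ℝ] H} {P : H →L[ℝ] H'}
  {L'inv : H' →L[ℝ] H'} {C₂ ε : ℝ}

theorem norm_proj_apply_le (hJ : ∀ v, ‖v‖ ≤ C₂ * ‖J v‖) (hC₂ : 0 ≤ C₂)
    (hP : ∀ v, ‖J (P v) - v‖ ≤ ε * (‖v‖ + ‖L v‖)) (v : H) :
    ‖P v‖ ≤ C₂ * ((1 + ε) * ‖v‖ + ε * ‖L v‖) :=
  calc ‖P v‖ ≤ C₂ * ‖J (P v)‖ := hJ _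
    _ ≤ C₂ * (‖v‖ + ‖J (P v) - v‖) := by gcongr; exact norm_le_insert' _ _
    _ ≤ C₂ * ((1 + ε) * ‖v‖ + ε * ‖L v‖) := by gcongr C₂ * ?_; linarith [hP v]

theorem norm_sub_ellipticProj_apply_le (hLinv : Linv ∘L L = 1)
    (hell : ∀ v, ‖J (L'inv (P v)) - Linv v‖ ≤ ε * (‖v‖ + ‖L v‖)) (v : H) :
    ‖v - J (L'inv (P (L v)))‖ ≤ ε * (‖L v‖ + ‖L (L v)‖) := by
  have h := hell (L v)
  rwa [← ContinuousLinearMap.comp_apply Linv, hLinv, one_apply_eq_self, norm_sub_rev] at h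

theorem norm_ellipticProj_sub_proj_apply_le (hJ : ∀ v, ‖v‖ ≤ C₂ * ‖J v‖) (hC₂ : 0 ≤ C₂)
    (hLinv : Linv ∘L L = 1) (hP : ∀ v, ‖J (P v) - v‖ ≤ ε * (‖v‖ + ‖L v‖))
    (hell : ∀ v, ‖J (L'inv (P v)) - Linv v‖ ≤ ε * (‖v‖ + ‖L v‖)) (v : H) :
    ‖L'inv (P (L (L v))) - P (L v)‖ ≤ C₂ * (ε * (‖L v‖ + 2 * ‖L (L v)‖ + ‖L (L (L v))‖)) :=
  calc _ ≤ C₂ * ‖J (L'inv (P (L (L v)))) - J (P (L v))‖ := by rw [← map_sub]; exact hJ _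
    _ ≤ C₂ * (‖J (L'inv (P (L (L v)))) - L v‖ + ‖L v - J (P (L v))‖) := by
      gcongr; exact norm_sub_le_norm_sub_add_norm_sub _ _ _
    _ ≤ C₂ * (ε * (‖L v‖ + 2 * ‖L (L v)‖ + ‖L (L (L v))‖)) := by
      gcongr C₂ * ?_
      linarith [norm_sub_ellipticProj_apply_le hLinv hell (L v), hP (L v),
        norm_sub_rev (J (L'inv (P (L (L v))))) (L v), norm_sub_rev (L v) (J (P (L v)))]

theorem norm_apply_le_mul_norm_of_norm_comp_le {A' L' : H' →L[ℝ] H'} {CA : ℝ}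
    (hinv : L'inv ∘L L' = 1) (hA : ‖A' ∘L L'inv‖ ≤ CA) (z : H') : ‖A' z‖ ≤ CA * ‖L' z‖ := by
  have h : A' z = (A' ∘L L'inv) (L' z) := by
    rw [ContinuousLinearMap.comp_apply, ← ContinuousLinearMap.comp_apply L'inv, hinv,
      one_apply_eq_self]
  rw [h]
  exact ((A' ∘L L'inv).le_opNorm _).trans (by gcongr)

end SpatialDiscretization

section EllipticProjection

variable {H H' : Type*} [NormedAddCommGroup H] [NormedSpace ℝ H] [NormedAddCommGroup H']
  [InnerProductSpace ℝ H'] {L : H →L[ℝ] H} {P : H →L[ℝ] H'} {A' B' L'inv α β : H' →L[ℝ] H'}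
  {k CL CA : ℝ}

theorem norm_one_sub_smul_apply_ellipticProj_sub_douglasRachford_le
    (hA' : ∀ v, ⟪A' v, v⟫ ≤ 0) (hinv : L'inv ∘L (A' + B') = 1)
    (hinv' : (A' + B') ∘L L'inv = 1) (hCL : ‖L'inv‖ ≤ CL) (hCA : ‖A' ∘L L'inv‖ ≤ CA)
    (hk : 0 ≤ k) (hα : α * (1 - k • A') = 1) (hα' : (1 - k • A') * α = 1)
    (hβ' : (1 - k • B') * β = 1) (v w : H) :
    ‖(1 - k • B') (L'inv (P (L w)) - douglasRachford (k • A') (k • B') α β (L'inv (P (L v))))‖ ≤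
      CL * ‖P (L w - L v - k • L (L v))‖ + k * ‖L'inv (P (L (L v))) - P (L v)‖ +
        k * (1 + 2 * CA) * ‖P (L w - L v)‖ := by
  have hL'L'inv (z : H') : (A' + B') (L'inv z) = z := by
    rw [← ContinuousLinearMap.comp_apply, hinv', one_apply_eq_self]
  have hresidual : L'inv (P (L w)) - L'inv (P (L v)) - k • (A' + B') (L'inv (P (L v))) =
      L'inv (P (L w - L v - k • L (L v))) + k • (L'inv (P (L (L v))) - P (L v)) := by
    rw [hL'L'inv]
    simp only [map_sub, map_smul]
    module
  have hincrement : (A' + B') (L'inv (P (L w)) - L'inv (P (L v))) = P (L w - L v) := by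
    rw [← map_sub, ← map_sub, hL'L'inv]
  have h := norm_douglasRachford_localError_le hA' hk hα hα' hβ'
    (norm_apply_le_mul_norm_of_norm_comp_le hinv hCA) (L'inv (P (L w))) (L'inv (P (L v)))
  rw [hresidual, hincrement] at h
  have hTaylor : ‖L'inv (P (L w - L v - k • L (L v)))‖ ≤ CL * ‖P (L w - L v - k • L (L v))‖ :=
    (L'inv.le_opNorm _).trans (by gcongr)
  linarith [norm_add_le (L'inv (P (L w - L v - k • L (L v))))
    (k • (L'inv (P (L (L v))) - P (L v))), norm_smul_of_nonneg hk (L'inv (P (L (L v))) - P (L v))]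

end EllipticProjection

section FullDiscretization

variable {H H' : Type*} [NormedAddCommGroup H] [InnerProductSpace ℝ H] [CompleteSpace H]
  [NormedAddCommGroup H'] [InnerProductSpace ℝ H']
  {L Linv : H →L[ℝ] H} {J : H' →L[ℝ] H} {P : H →L[ℝ] H'} {A' B' L'inv α β : H' →L[ℝ] H'}
  {k ε C₂ CL CA : ℝ}

theorem norm_proj_exp_smul_apply_sub_le (hL : ∀ v, ⟪L v, v⟫ ≤ 0) (hJ : ∀ v, ‖v‖ ≤ C₂ * ‖J v‖)
    (hC₂ : 0 ≤ C₂) (hP : ∀ v, ‖J (P v) - v‖ ≤ ε * (‖v‖ + ‖L v‖)) (hε : 0 ≤ ε) (hk : 0 ≤ k)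
    (v : H) : ‖P (exp (k • L) v - v)‖ ≤ C₂ * (1 + ε) * k * (‖L v‖ + ‖L (L v)‖) :=
  calc _ ≤ C₂ * ((1 + ε) * ‖exp (k • L) v - v‖ + ε * ‖L (exp (k • L) v - v)‖) :=
        norm_proj_apply_le hJ hC₂ hP _
    _ ≤ C₂ * ((1 + ε) * (k * ‖L v‖) + ε * (k * ‖L (L v)‖)) := by
      rw [map_sub, apply_exp_smul_apply]
      gcongr <;> exact norm_exp_smul_apply_sub_le hL hk _
    _ ≤ C₂ * (1 + ε) * k * (‖L v‖ + ‖L (L v)‖) := by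
      have : ε * (k * ‖L (L v)‖) ≤ (1 + ε) * (k * ‖L (L v)‖) := by gcongr; linarith
      nlinarith [mul_nonneg hC₂ (mul_nonneg hk (norm_nonneg (L (L v))))]

theorem norm_proj_exp_smul_apply_sub_sub_le (hL : ∀ v, ⟪L v, v⟫ ≤ 0)
    (hJ : ∀ v, ‖v‖ ≤ C₂ * ‖J v‖) (hC₂ : 0 ≤ C₂) (hP : ∀ v, ‖J (P v) - v‖ ≤ ε * (‖v‖ + ‖L v‖))
    (hε : 0 ≤ ε) (hk : 0 ≤ k) (v : H) :
    ‖P (exp (k • L) v - v - k • L v)‖ ≤ C₂ * ((1 + ε) * k ^ 2 + 2 * ε * k) * ‖L (L v)‖ :=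
  calc _ ≤ C₂ * ((1 + ε) * ‖exp (k • L) v - v - k • L v‖ +
        ε * ‖L (exp (k • L) v - v - k • L v)‖) := norm_proj_apply_le hJ hC₂ hP _
    _ ≤ C₂ * ((1 + ε) * (k ^ 2 * ‖L (L v)‖) + ε * (2 * k * ‖L (L v)‖)) := by
      gcongr
      · exact norm_exp_smul_apply_sub_sub_le hL hk _
      · exact norm_apply_exp_smul_apply_sub_sub_le hL hk _
    _ = C₂ * ((1 + ε) * k ^ 2 + 2 * ε * k) * ‖L (L v)‖ := by ring

theorem norm_one_sub_smul_apply_localError_le (hL : ∀ v, ⟪L v, v⟫ ≤ 0)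
    (hLinv : Linv ∘L L = 1) (hJ : ∀ v, ‖v‖ ≤ C₂ * ‖J v‖) (hC₂ : 0 ≤ C₂)
    (hP : ∀ v, ‖J (P v) - v‖ ≤ ε * (‖v‖ + ‖L v‖))
    (hell : ∀ v, ‖J (L'inv (P v)) - Linv v‖ ≤ ε * (‖v‖ + ‖L v‖)) (hA' : ∀ v, ⟪A' v, v⟫ ≤ 0)
    (hinv : L'inv ∘L (A' + B') = 1) (hinv' : (A' + B') ∘L L'inv = 1) (hCL : ‖L'inv‖ ≤ CL)
    (hCA : ‖A' ∘L L'inv‖ ≤ CA) (hε : 0 ≤ ε) (hk : 0 ≤ k) (hα : α * (1 - k • A') = 1)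
    (hα' : (1 - k • A') * α = 1) (hβ' : (1 - k • B') * β = 1) (v : H) :
    ‖(1 - k • B') (L'inv (P (L (exp (k • L) v))) -
        douglasRachford (k • A') (k • B') α β (L'inv (P (L v))))‖ ≤
      C₂ * (CL + 2 * CA + 2) * ((1 + ε) * k ^ 2 + 2 * ε * k) *
        (‖L v‖ + ‖L (L v)‖ + ‖L (L (L v))‖) := by
  have h := norm_one_sub_smul_apply_ellipticProj_sub_douglasRachford_le (L := L) (P := P) hA'
    hinv hinv' hCL hCA hk hα hα' hβ' v (exp (k • L) v)
  rw [apply_exp_smul_apply] at h ⊢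
  have hZ₂ : ‖L (L v)‖ + ‖L (L (L v))‖ ≤ ‖L v‖ + ‖L (L v)‖ + ‖L (L (L v))‖ := by
    rw [add_assoc]; exact le_add_of_nonneg_left (norm_nonneg _)
  have hZ₃ : ‖L (L (L v))‖ ≤ ‖L v‖ + ‖L (L v)‖ + ‖L (L (L v))‖ :=
    le_add_of_nonneg_left (by positivity)
  set Z := ‖L v‖ + ‖L (L v)‖ + ‖L (L (L v))‖
  set e := (1 + ε) * k ^ 2 + 2 * ε * k
  have hZ : 0 ≤ Z := by positivity
  have hCL₀ : 0 ≤ CL := (norm_nonneg _).trans hCL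
  have hCA₀ : 0 ≤ CA := (norm_nonneg _).trans hCA
  have hTaylor : CL * ‖P (exp (k • L) (L v) - L v - k • L (L v))‖ ≤ CL * C₂ * e * Z := by
    have := norm_proj_exp_smul_apply_sub_sub_le hL hJ hC₂ hP hε hk (L v)
    nlinarith [mul_le_mul_of_nonneg_left hZ₃ (by positivity : 0 ≤ C₂ * e)]
  have hspace : k * ‖L'inv (P (L (L v))) - P (L v)‖ ≤ C₂ * e * Z :=
    calc _ ≤ k * (C₂ * (ε * (2 * Z))) := by
          gcongr
          refine (norm_ellipticProj_sub_proj_apply_le hJ hC₂ hLinv hP hell v).trans ?_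
          gcongr
          linarith [norm_nonneg (L v), norm_nonneg (L (L (L v)))]
      _ ≤ C₂ * e * Z := by
          have : 2 * ε * k ≤ e := le_add_of_nonneg_left (by positivity)
          nlinarith [mul_nonneg hC₂ hZ]
  have hincrement : k * (1 + 2 * CA) * ‖P (exp (k • L) (L v) - L v)‖ ≤
      (1 + 2 * CA) * C₂ * e * Z :=
    calc _ ≤ k * (1 + 2 * CA) * (C₂ * (1 + ε) * k * Z) := by
          gcongr
          exact (norm_proj_exp_smul_apply_sub_le hL hJ hC₂ hP hε hk _).trans (by gcongr)
      _ ≤ (1 + 2 * CA) * C₂ * e * Z := by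
          have : (1 + ε) * k ^ 2 ≤ e := le_add_of_nonneg_right (by positivity)
          nlinarith [mul_nonneg (mul_nonneg (by linarith : (0:ℝ) ≤ 1 + 2 * CA) hC₂) hZ]
  linarith

theorem norm_one_sub_smul_apply_globalError_le (hL : ∀ v, ⟪L v, v⟫ ≤ 0)
    (hLinv : Linv ∘L L = 1) (hJ : ∀ v, ‖v‖ ≤ C₂ * ‖J v‖) (hC₂ : 0 ≤ C₂)
    (hP : ∀ v, ‖J (P v) - v‖ ≤ ε * (‖v‖ + ‖L v‖))
    (hell : ∀ v, ‖J (L'inv (P v)) - Linv v‖ ≤ ε * (‖v‖ + ‖L v‖)) (hA' : ∀ v, ⟪A' v, v⟫ ≤ 0)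
    (hB' : ∀ v, ⟪B' v, v⟫ ≤ 0) (hinv : L'inv ∘L (A' + B') = 1)
    (hinv' : (A' + B') ∘L L'inv = 1) (hCL : ‖L'inv‖ ≤ CL) (hCA : ‖A' ∘L L'inv‖ ≤ CA)
    (hε : 0 ≤ ε) (hk : 0 ≤ k) (hα : α * (1 - k • A') = 1) (hα' : (1 - k • A') * α = 1)
    (hβ : β * (1 - k • B') = 1) (hβ' : (1 - k • B') * β = 1) (n : ℕ) (η : H) :
    ‖(1 - k • B') (L'inv (P (L (exp ((n * k) • L) η))) -
        (douglasRachford (k • A') (k • B') α β ^ n) (L'inv (P (L η))))‖ ≤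
      n * (C₂ * (CL + 2 * CA + 2) * ((1 + ε) * k ^ 2 + 2 * ε * k) *
        (‖L η‖ + ‖L (L η)‖ + ‖L (L (L η))‖)) := by
  have hCL₀ : 0 ≤ CL := (norm_nonneg _).trans hCL
  have hCA₀ : 0 ≤ CA := (norm_nonneg _).trans hCA
  have hstable (x : H') : ‖(1 - k • B') (douglasRachford (k • A') (k • B') α β x)‖ ≤
      ‖(1 - k • B') x‖ :=
    norm_one_sub_apply_douglasRachford_apply_le (inner_smul_apply_self_nonpos hA' hk)
      (inner_smul_apply_self_nonpos hB' hk) hα hα' hβ hβ' x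
  have hstep (m : ℕ) : ‖(1 - k • B') (L'inv (P (L (exp (((m + 1 : ℕ) * k) • L) η))) -
      douglasRachford (k • A') (k • B') α β (L'inv (P (L (exp ((m * k) • L) η)))))‖ ≤
      C₂ * (CL + 2 * CA + 2) * ((1 + ε) * k ^ 2 + 2 * ε * k) *
        (‖L η‖ + ‖L (L η)‖ + ‖L (L (L η))‖) := by
    rw [show ((m + 1 : ℕ) : ℝ) * k = k + m * k by push_cast; ring, exp_add_smul_apply]
    exact (norm_one_sub_smul_apply_localError_le hL hLinv hJ hC₂ hP hell hA' hinv hinv' hCL hCA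
      hε hk hα hα' hβ' _).trans
      (mul_le_mul_of_nonneg_left (sum_norm_iterate_exp_smul_apply_le hL (by positivity) η)
        (by positivity))
  simpa using norm_apply_sub_pow_apply_le
    (y := fun m : ℕ => L'inv (P (L (exp ((m * k) • L) η)))) hstable hstep n

end FullDiscretization

theorem add_natCast_mul_localError_div_le {n : ℕ} {k ε T K C₁ Z : ℝ} (hk : 0 ≤ k) (hε : 0 ≤ ε)
    (hnk : n * k ≤ T) (hK : 0 ≤ K) (hC₁ : 0 < C₁) (hZ : 0 ≤ Z) :
    ε * Z + n * (K * ((1 + ε) * k ^ 2 + 2 * ε * k) * Z) / C₁ ≤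
      (1 + K * (T * (T + 2)) / C₁) * (ε + k) * Z := by
  have hT : 0 ≤ T := (by positivity : (0 : ℝ) ≤ n * k).trans hnk
  -- `n k² ≤ (n k)²` keeps the accumulated `ε k²` terms linear in `ε`
  have hn : (n : ℝ) ≤ n ^ 2 := by exact_mod_cast Nat.le_self_pow two_ne_zero n
  have hk₁ : n * k ^ 2 ≤ T * k := by nlinarith [mul_le_mul_of_nonneg_right hnk hk]
  have hk₂ : n * k ^ 2 ≤ T ^ 2 := by nlinarith [mul_le_mul_of_nonneg_right hn (sq_nonneg k)]
  have hsum : n * ((1 + ε) * k ^ 2 + 2 * ε * k) ≤ T * (T + 2) * (ε + k) := by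
    nlinarith [mul_le_mul_of_nonneg_left hk₂ hε, mul_le_mul_of_nonneg_left hnk hε,
      mul_nonneg hT hk, mul_nonneg (mul_nonneg hT hT) hk]
  calc ε * Z + n * (K * ((1 + ε) * k ^ 2 + 2 * ε * k) * Z) / C₁
      = ε * Z + K * Z / C₁ * (n * ((1 + ε) * k ^ 2 + 2 * ε * k)) := by ring
    _ ≤ ε * Z + K * Z / C₁ * (T * (T + 2) * (ε + k)) := by gcongr
    _ ≤ (1 + K * (T * (T + 2)) / C₁) * (ε + k) * Z := by
      have : ε * Z ≤ (ε + k) * Z := by gcongr; linarith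
      linarith [show (1 + K * (T * (T + 2)) / C₁) * (ε + k) * Z =
        (ε + k) * Z + K * Z / C₁ * (T * (T + 2) * (ε + k)) by ring]

/-- (Bounded-operator form of Theorem 4.1, Douglas–Rachford case
`r = 1`, `q = 1`.) For all `T > 0` and `C₁, C₂, C_A, C_L > 0` there is `C > 0`
such that for any real Hilbert space `H`, bounded dissipative bijective `L`
(inverse `Linv`), finite-dimensional inner-product space `H'` embedded via `J`
with uniformly equivalent norms, projection `P`, dissipative `A', B'` with
`L' = A' + B'` bijective, `‖L'⁻¹‖ ≤ C_L`, `‖A' ∘ L'⁻¹‖ ≤ C_A`, and `ε ≥ 0`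
satisfying the approximation and elliptic-error hypotheses: for the
Douglas–Rachford operator `S' = (I - kB')⁻¹(I - kA')⁻¹(I + k²A'B')` and
`Q = L'⁻¹ P L`, whenever `n k ≤ T`,
`‖exp(nkL)η - J(S'ⁿ(Qη))‖ ≤ C(ε + k)(‖Lη‖ + ‖L²η‖ + ‖L³η‖)`. -/
theorem full_discretization_error_bound_douglas_rachford
    (T C₁ C₂ CA CL : ℝ) (hT : 0 < T) (hC₁ : 0 < C₁) (hC₂ : 0 < C₂)
    (hCA : 0 < CA) (hCL : 0 < CL) :
    ∃ C : ℝ, 0 < C ∧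
      ∀ (H : Type) [NormedAddCommGroup H] [InnerProductSpace ℝ H] [CompleteSpace H]
        (H' : Type) [NormedAddCommGroup H'] [InnerProductSpace ℝ H']
        [FiniteDimensional ℝ H']
        (L : H →L[ℝ] H), (∀ v : H, ⟪L v, v⟫ ≤ 0) →
        ∀ (Linv : H →L[ℝ] H), Linv ∘L L = 1 → L ∘L Linv = 1 →
        ∀ (J : H' →L[ℝ] H), Function.Injective ⇑J →
        (∀ v : H', C₁ * ‖J v‖ ≤ ‖v‖ ∧ ‖v‖ ≤ C₂ * ‖J v‖) →
        ∀ (P : H →L[ℝ] H') (A' B' : H' →L[ℝ] H'),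
        (∀ v : H', ⟪A' v, v⟫ ≤ 0) → (∀ v : H', ⟪B' v, v⟫ ≤ 0) →
        ∀ (L' : H' →L[ℝ] H'), L' = A' + B' →
        ∀ (L'inv : H' →L[ℝ] H'), L'inv ∘L L' = 1 → L' ∘L L'inv = 1 →
        ‖L'inv‖ ≤ CL → ‖A' ∘L L'inv‖ ≤ CA →
        ∀ (ε : ℝ), 0 ≤ ε →
        (∀ v : H, ‖J (P v) - v‖ ≤ ε * (‖v‖ + ‖L v‖)) →
        (∀ v : H, ‖J (L'inv (P v)) - Linv v‖ ≤ ε * (‖v‖ + ‖L v‖)) →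
        ∀ (n : ℕ) (k : ℝ), 0 < k → (n : ℝ) * k ≤ T →
        ∀ (α' β' : H' →L[ℝ] H'),
          α' ∘L (1 - k • A') = 1 → (1 - k • A' : H' →L[ℝ] H') ∘L α' = 1 →
          β' ∘L (1 - k • B') = 1 → (1 - k • B' : H' →L[ℝ] H') ∘L β' = 1 →
        ∀ (S' : H' →L[ℝ] H'), S' = β' ∘L α' ∘L (1 + k ^ 2 • (A' ∘L B')) →
        ∀ (Q : H →L[ℝ] H'), Q = L'inv ∘L P ∘L L →
        ∀ (η : H),
        ‖(NormedSpace.exp (((n : ℝ) * k) • L)) η - J ((S' ^ n) (Q η))‖ ≤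
          C * (ε + k) * (‖L η‖ + ‖L (L η)‖ + ‖L (L (L η))‖) := by
  refine ⟨1 + C₂ * (CL + 2 * CA + 2) * (T * (T + 2)) / C₁, by positivity, ?_⟩
  intro H _ _ _ H' _ _ _ L hL Linv hLinv _ J _ hJ P A' B' hA' hB' L' hL' L'inv hinv hinv'
    hCL' hCA' ε hε hP hell n k hk hnk α β hα hα' hβ hβ' S' hS' Q hQ η
  subst hL' hS' hQ
  set u := exp ((n * k) • L) η
  have hJ_le (x : H') : ‖J x‖ ≤ ‖(1 - k • B') x‖ / C₁ := by
    rw [le_div_iff₀ hC₁, mul_comm]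
    exact (hJ x).1.trans (norm_le_norm_one_sub_apply (inner_smul_apply_self_nonpos hB' hk.le) x)
  have hspace : ‖u - J (L'inv (P (L u)))‖ ≤ ε * (‖L η‖ + ‖L (L η)‖ + ‖L (L (L η))‖) :=
    (norm_sub_ellipticProj_apply_le hLinv hell u).trans <| mul_le_mul_of_nonneg_left
      (by linarith [sum_norm_iterate_exp_smul_apply_le hL (by positivity : (0 : ℝ) ≤ n * k) η,
        norm_nonneg (L (L (L u)))]) hε
  have hglobal := norm_one_sub_smul_apply_globalError_le hL hLinv (fun v => (hJ v).2) hC₂.le hP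
    hell hA' hB' hinv hinv' hCL' hCA' hε hk.le hα hα' hβ hβ' n η
  rw [show β ∘L α ∘L (1 + k ^ 2 • (A' ∘L B')) = douglasRachford (k • A') (k • B') α β by
    rw [douglasRachford, smul_mul_smul_comm, ← sq]; rfl]
  calc _ ≤ ‖u - J (L'inv (P (L u)))‖ +
        ‖J (L'inv (P (L u)) - (douglasRachford (k • A') (k • B') α β ^ n) (L'inv (P (L η))))‖ := by
        rw [map_sub]; exact norm_sub_le_norm_sub_add_norm_sub _ _ _
    _ ≤ _ := add_le_add hspace ((hJ_le _).trans (div_le_div_of_nonneg_right hglobal hC₁.le))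
    _ ≤ _ := add_natCast_mul_localError_div_le hk.le hε hnk (by positivity) hC₁ (by positivity)
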